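/- Let A be an n×n matrix with δ ≤ a_{ij} ≤ 1. Define a probability measure on closed walks of length n by P(π) = weight(π)/trace(A^n). For a = (α_1,...,α_n) with Σα_i = n and α_1 > 0, let Π(a) be the set of closed walks π of length n with deg_i(π) = α_i for all i, and let b = (α_1−1, α_2+1, α_3,...,α_n). Then (α_2+1) P(Π(b)) ≤ δ^{-2} α_1 P(Π(a)). -/

import Mathlib

/-!
Replacing the vertex `π k = v` of a closed walk by `u` is a bijection between pairs `(π, k)`
with `π ∈ Π(b)`, `π k = v` and pairs `(σ, k)` with `σ ∈ Π(a)`, `σ k = u`. Counted with the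
weight of the walk, the first set has total `(α₂ + 1) · weight(Π(b))` and the second
`α₁ · weight(Π(a))`. Changing one vertex alters only the two factors of the weight on the
steps into and out of it, each of which lies in `[δ, 1]`, so the bijection multiplies weights
by at least `δ²`. Finally `trace (Aⁿ) ≥ 0` since `A` is entrywise nonnegative.
-/

open Finset Function

variable {G V : Type*}

section Degrees

variable [DecidableEq V]

def shiftDegree (a : V → ℕ) (u v : V) : V → ℕ :=
  update (update a u (a u - 1)) v (a v + 1)

lemma shiftDegree_apply_right (a : V → ℕ) (u v : V) : shiftDegree a u v v = a v + 1 :=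
  update_self ..

lemma shiftDegree_shiftDegree {a : V → ℕ} {u v : V} (huv : u ≠ v) (hu : 0 < a u) :
    shiftDegree (shiftDegree a u v) v u = a := by
  funext i
  rcases eq_or_ne i u with rfl | hiu
  · simp [shiftDegree, huv]
    omega
  rcases eq_or_ne i v with rfl | hiv
  · simp [shiftDegree, hiu]
  · simp [shiftDegree, hiu, hiv]

variable [Fintype G] [DecidableEq G]

lemma card_fiber_update_add (π : G → V) (k : G) (v i : V) :
    #{j | update π k v j = i} + (if π k = i then 1 else 0) =
      #{j | π j = i} + if v = i then 1 else 0 := by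
  simp only [card_filter]
  rw [← add_sum_erase _ _ (mem_univ k), ← add_sum_erase _ _ (mem_univ k), update_self,
    sum_congr rfl fun j hj => by rw [update_of_ne (ne_of_mem_erase hj)]]
  ring

variable [Fintype V]

def walksWithDegrees (a : V → ℕ) : Finset (G → V) :=
  {π | ∀ i, #{k | π k = i} = a i}

lemma update_mem_walksWithDegrees {a : V → ℕ} {π : G → V} {k : G} {u v : V}
    (hπ : π ∈ walksWithDegrees a) (hk : π k = u) (huv : u ≠ v) :
    update π k v ∈ walksWithDegrees (shiftDegree a u v) := by
  simp only [walksWithDegrees, mem_filter, mem_univ, true_and] at hπ ⊢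
  intro i
  have h := card_fiber_update_add π k v i
  rw [hπ i, hk] at h
  rcases eq_or_ne i v with rfl | hiv
  · simp [shiftDegree, huv] at h ⊢
    omega
  rcases eq_or_ne i u with rfl | hiu
  · simp [shiftDegree, hiv, Ne.symm hiv] at h ⊢
    omega
  · simp [shiftDegree, hiu, hiv, Ne.symm hiu, Ne.symm hiv] at h ⊢
    exact h

lemma sum_sum_fiber_walksWithDegrees {β : Type*} [AddCommMonoid β] (f : (G → V) → β)
    (a : V → ℕ) (u : V) :
    ∑ π ∈ walksWithDegrees a, ∑ _k ∈ {k | π k = u}, f π =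
      a u • ∑ π ∈ walksWithDegrees a, f π := by
  rw [smul_sum]
  refine sum_congr rfl fun π hπ => ?_
  rw [sum_const, (mem_filter.mp hπ).2 u]

lemma sum_sum_update_walksWithDegrees {β : Type*} [AddCommMonoid β] (f : (G → V) → β)
    {a : V → ℕ} {u v : V} (huv : u ≠ v) (hu : 0 < a u) :
    ∑ π ∈ walksWithDegrees (shiftDegree a u v), ∑ k ∈ {k | π k = v}, f (update π k u) =
      ∑ σ ∈ walksWithDegrees a, ∑ _k ∈ {k | σ k = u}, f σ := by
  rw [sum_sigma', sum_sigma']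
  refine sum_nbij' (fun p => ⟨update p.1 p.2 u, p.2⟩) (fun q => ⟨update q.1 q.2 v, q.2⟩)
    ?_ ?_ ?_ ?_ fun _ _ => rfl
  · rintro ⟨π, k⟩ hp
    simp only [mem_sigma, mem_filter, mem_univ, true_and] at hp ⊢
    refine ⟨?_, update_self ..⟩
    simpa [shiftDegree_shiftDegree huv hu] using
      update_mem_walksWithDegrees hp.1 hp.2 huv.symm
  · rintro ⟨σ, k⟩ hq
    simp only [mem_sigma, mem_filter, mem_univ, true_and] at hq ⊢
    exact ⟨update_mem_walksWithDegrees hq.1 hq.2 huv, update_self ..⟩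
  · rintro ⟨π, k⟩ hp
    simp only [mem_sigma, mem_filter, mem_univ, true_and] at hp
    simp [← hp.2]
  · rintro ⟨σ, k⟩ hq
    simp only [mem_sigma, mem_filter, mem_univ, true_and] at hq
    simp [← hq.2]

end Degrees

variable [AddGroup G] [Fintype G] [DecidableEq G]

def walkWeight (A : Matrix V V ℝ) (s : G) (π : G → V) : ℝ :=
  ∏ k, A (π k) (π (k + s))

lemma sq_mul_walkWeight_le_walkWeight_update {A : Matrix V V ℝ} {δ : ℝ} (hδ : 0 ≤ δ)
    (hA : ∀ i j, δ ≤ A i j ∧ A i j ≤ 1) {s : G} (hs : s ≠ 0) (π : G → V) (k : G) (v : V) :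
    δ ^ 2 * walkWeight A s π ≤ walkWeight A s (update π k v) := by
  have hks : k - s ≠ k := fun h => hs (sub_eq_self.mp h)
  have split : ∀ σ : G → V, walkWeight A s σ =
      (A (σ (k - s)) (σ (k - s + s)) * A (σ k) (σ (k + s))) *
        ∏ j ∈ {k - s, k}ᶜ, A (σ j) (σ (j + s)) := fun σ => by
    rw [walkWeight, ← prod_mul_prod_compl {k - s, k}, prod_pair hks]
  have rest : ∀ j ∈ ({k - s, k}ᶜ : Finset G),
      A (update π k v j) (update π k v (j + s)) = A (π j) (π (j + s)) := by
    intro j hj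
    simp only [mem_compl, mem_insert, mem_singleton, not_or] at hj
    rw [update_of_ne hj.2, update_of_ne fun h => hj.1 (eq_sub_of_add_eq h)]
  have hA0 : ∀ i j, 0 ≤ A i j := fun i j => hδ.trans (hA i j).1
  have old_le : A (π (k - s)) (π (k - s + s)) * A (π k) (π (k + s)) ≤ 1 :=
    mul_le_one₀ (hA _ _).2 (hA0 _ _) (hA _ _).2
  have new_ge : δ ^ 2 ≤ A (update π k v (k - s)) (update π k v (k - s + s)) *
      A (update π k v k) (update π k v (k + s)) := by
    rw [sq]; exact mul_le_mul (hA _ _).1 (hA _ _).1 hδ (hA0 _ _)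
  set R := ∏ j ∈ {k - s, k}ᶜ, A (π j) (π (j + s))
  have hR : 0 ≤ R := prod_nonneg fun _ _ => hA0 _ _
  rw [split π, split (update π k v), prod_congr rfl rest]
  calc _ ≤ δ ^ 2 * R :=
        mul_le_mul_of_nonneg_left (mul_le_of_le_one_left hR old_le) (sq_nonneg δ)
    _ ≤ _ := mul_le_mul_of_nonneg_right new_ge hR

variable [Fintype V] [DecidableEq V]

lemma sq_mul_sum_walkWeight_shiftDegree_le {A : Matrix V V ℝ} {δ : ℝ} (hδ : 0 ≤ δ)
    (hA : ∀ i j, δ ≤ A i j ∧ A i j ≤ 1) {s : G} (hs : s ≠ 0)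
    {a : V → ℕ} {u v : V} (huv : u ≠ v) (hu : 0 < a u) :
    δ ^ 2 * (((a v : ℝ) + 1) * ∑ π ∈ walksWithDegrees (shiftDegree a u v), walkWeight A s π) ≤
      a u * ∑ σ ∈ walksWithDegrees a, walkWeight A s σ := by
  calc δ ^ 2 * (((a v : ℝ) + 1) * ∑ π ∈ walksWithDegrees (shiftDegree a u v), walkWeight A s π)
      = ∑ π ∈ walksWithDegrees (shiftDegree a u v), ∑ _k ∈ {k | π k = v},
          δ ^ 2 * walkWeight A s π := by
        rw [sum_sum_fiber_walksWithDegrees, shiftDegree_apply_right, nsmul_eq_mul, mul_sum,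
          mul_sum, mul_sum]
        push_cast
        ring_nf
    _ ≤ ∑ π ∈ walksWithDegrees (shiftDegree a u v), ∑ k ∈ {k | π k = v},
          walkWeight A s (update π k u) :=
        sum_le_sum fun π _ => sum_le_sum fun k _ =>
          sq_mul_walkWeight_le_walkWeight_update hδ hA hs π k u
    _ = a u * ∑ σ ∈ walksWithDegrees a, walkWeight A s σ := by
        rw [sum_sum_update_walksWithDegrees _ huv hu, sum_sum_fiber_walksWithDegrees,
          nsmul_eq_mul]

/-- with `P(π) = weight(π)/trace(Aⁿ)` on closed walks of length
`n`, and `Π(a)` the walks with degree sequence `a`, if `a₁ > 0` and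
`b = (a₁ - 1, a₂ + 1, a₃, …, aₙ)` then `(a₂+1) P(Π(b)) ≤ δ⁻² a₁ P(Π(a))`.
(Vertices `1, 2` of the paper are `0, 1 : Fin n`.) -/
theorem walk_degree_shift_inequality (n : ℕ) (hn : 2 ≤ n)
    (δ : ℝ) (hδ0 : 0 < δ)
    (A : Matrix (Fin n) (Fin n) ℝ)
    (hA : ∀ i j, δ ≤ A i j ∧ A i j ≤ 1)
    (a : Fin n → ℕ) (ha1 : 0 < a ⟨0, by omega⟩) :
    ((a ⟨1, by omega⟩ : ℝ) + 1) *
        ((∑ π ∈ Finset.univ.filter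
            (fun π : Fin n → Fin n => ∀ i : Fin n,
              (Finset.univ.filter fun k : Fin n => π k = i).card =
                Function.update (Function.update a ⟨0, by omega⟩
                  (a ⟨0, by omega⟩ - 1)) ⟨1, by omega⟩ (a ⟨1, by omega⟩ + 1) i),
            ∏ k : Fin n, A (π k) (π (k + ⟨1, by omega⟩))) /
          Matrix.trace (A ^ n)) ≤
      (δ ^ 2)⁻¹ * (a ⟨0, by omega⟩ : ℝ) *
        ((∑ π ∈ Finset.univ.filter
            (fun π : Fin n → Fin n => ∀ i : Fin n,
              (Finset.univ.filter fun k : Fin n => π k = i).card = a i),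
            ∏ k : Fin n, A (π k) (π (k + ⟨1, by omega⟩))) /
          Matrix.trace (A ^ n)) := by
  have : NeZero n := ⟨by omega⟩
  have h01 : (⟨0, by omega⟩ : Fin n) ≠ ⟨1, by omega⟩ := by simp [Fin.ext_iff]
  have h10 : (⟨1, by omega⟩ : Fin n) ≠ 0 := by simp [Fin.ext_iff]
  have key := sq_mul_sum_walkWeight_shiftDegree_le hδ0.le hA h10 h01 ha1
  have hT : 0 ≤ Matrix.trace (A ^ n) :=
    sum_nonneg fun i _ => Matrix.pow_apply_nonneg (fun i j => hδ0.le.trans (hA i j).1) n i i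
  -- not `rfl`: the statement decides `∀ i : Fin n` by `Nat.decidableForallFin`
  have hwalks : ∀ c : Fin n → ℕ,
      univ.filter (fun π : Fin n → Fin n => ∀ i, #{k | π k = i} = c i) = walksWithDegrees c :=
    fun c => by ext; simp [walksWithDegrees]
  rw [hwalks, hwalks, ← mul_div_assoc, ← mul_div_assoc]
  refine div_le_div_of_nonneg_right ?_ hT
  rw [mul_assoc, le_inv_mul_iff₀ (by positivity)]
  exact key
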